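/- arXiv:1211.1197 — 4 statements merged into one kernel-verified Lean document; each statement's English description precedes it below -/
import Mathlib

section
/- Let θ₀ ∈ ℝ^n satisfy the weak ℓ_s-ball condition: max_{1≤i≤n} i·|θ_{[i]}|^s ≤ n(p_n/n)^s, where θ_{[1]} ≥ θ_{[2]} ≥ ⋯ are the sorted absolute values of coordinates and 0 < s < 2. Let θ₁ be obtained from θ₀ by keeping its p* largest coordinates (in absolute value) and setting the rest to zero. Then ‖θ₁ − θ₀‖² ≤ (p_n/n)² · (s/(2−s)) · n^{2/s} · (p*)^{1−2/s}. -/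
/-!
A coordinate of rank `i + 1` satisfies `(i + 1) |θ|^s ≤ n (p_n/n)^s`, hence
`θ² ≤ (p_n/n)² n^{2/s} (i + 1)^{-2/s}`. Summing over the discarded ranks `i ≥ p*` and comparing
with `∫_{p*}^∞ x^{-2/s} dx = (p*)^{1-2/s} / (2/s - 1)` gives the bound, as `1/(2/s - 1) = s/(2 - s)`.
-/

open Finset

theorem Fin.sum_ite_le_eq_sum_Ico {M : Type*} [AddCommMonoid M] (f : ℕ → M) (a n : ℕ) :
    ∑ i : Fin n, (if a ≤ (i : ℕ) then f i else 0) = ∑ k ∈ Ico a n, f k := by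
  rw [Fin.sum_univ_eq_sum_range (fun k => if a ≤ k then f k else 0), ← sum_filter, range_eq_Ico,
    Ico_filter_le, max_eq_right a.zero_le]

theorem sum_Ico_rpow_neg_le {p : ℝ} (hp : 1 < p) {a : ℕ} (ha : 1 ≤ a) (b : ℕ) :
    ∑ k ∈ Ico a b, ((k : ℝ) + 1) ^ (-p) ≤ (a : ℝ) ^ (1 - p) / (p - 1) := by
  have ha' : (0 : ℝ) < a := by exact_mod_cast ha
  rcases le_or_gt a b with hab | hba
  · have hanti : AntitoneOn (fun x : ℝ => x ^ (-p)) (Set.Icc a b) := fun x hx y _ hxy =>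
      Real.rpow_le_rpow_of_nonpos (ha'.trans_le hx.1) hxy (by linarith)
    have hzero : (0 : ℝ) ∉ Set.uIcc (a : ℝ) b := by
      rw [Set.uIcc_of_le (by exact_mod_cast hab)]
      exact fun h => ha'.not_ge h.1
    calc ∑ k ∈ Ico a b, ((k : ℝ) + 1) ^ (-p)
        ≤ ∫ x in (a : ℝ)..b, x ^ (-p) := by
          simpa using hanti.sum_le_integral_Ico hab
      _ = ((a : ℝ) ^ (1 - p) - (b : ℝ) ^ (1 - p)) / (p - 1) := by
          rw [integral_rpow (Or.inr ⟨by linarith, hzero⟩), show -p + 1 = 1 - p by ring,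
            div_eq_div_iff (by linarith) (by linarith)]
          ring
      _ ≤ (a : ℝ) ^ (1 - p) / (p - 1) := by
          gcongr
          exact sub_le_self _ (by positivity)
  · rw [Ico_eq_empty_of_le hba.le, sum_empty]
    exact div_nonneg (by positivity) (by linarith)

theorem sq_le_of_mul_rpow_abs_le {x k c r s : ℝ} (hs : 0 < s) (hk : 0 < k) (hc : 0 ≤ c)
    (hr : 0 ≤ r) (h : k * |x| ^ s ≤ c * r ^ s) :
    x ^ 2 ≤ r ^ 2 * c ^ (2 / s) * k ^ (-(2 / s)) := by
  have hx : |x| ^ s ≤ c * r ^ s / k := by rw [le_div_iff₀ hk]; linarith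
  have hs2 : s * (2 / s) = 2 := by field_simp
  calc x ^ 2 = (|x| ^ s) ^ (2 / s) := by
        rw [← Real.rpow_mul (abs_nonneg x), hs2, Real.rpow_two, sq_abs]
    _ ≤ (c * r ^ s / k) ^ (2 / s) := by gcongr
    _ = r ^ 2 * c ^ (2 / s) * k ^ (-(2 / s)) := by
        rw [Real.div_rpow (by positivity) hk.le, Real.mul_rpow hc (by positivity),
          ← Real.rpow_mul hr, hs2, Real.rpow_two, Real.rpow_neg hk.le]
        ring

theorem weak_ball_projection_general {n : ℕ} (θ₀ : Fin n → ℝ) (pn : ℕ) (s : ℝ)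
    (hs0 : 0 < s) (hs2 : s < 2) (pstar : ℕ) (hpstar1 : 1 ≤ pstar)
    (e : Equiv.Perm (Fin n))
    (hweak : ∀ i : Fin n, ((i : ℝ) + 1) * |θ₀ (e i)| ^ s ≤ (n : ℝ) * ((pn : ℝ) / n) ^ s)
    (θ₁ : Fin n → ℝ)
    (hθ₁ : θ₁ = fun j => if ((e.symm j : ℕ) < pstar) then θ₀ j else 0) :
    ∑ i, (θ₁ i - θ₀ i) ^ 2 ≤
      ((pn : ℝ) / n) ^ 2 * (s / (2 - s)) * (n : ℝ) ^ (2 / s)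
        * (pstar : ℝ) ^ (1 - 2 / s) := by
  set C := ((pn : ℝ) / n) ^ 2 * (n : ℝ) ^ (2 / s)
  have hp : 1 < 2 / s := (one_lt_div hs0).mpr hs2
  have htail : ∀ i : Fin n, (θ₁ (e i) - θ₀ (e i)) ^ 2 =
      if pstar ≤ (i : ℕ) then θ₀ (e i) ^ 2 else 0 := fun i => by
    by_cases hi : pstar ≤ (i : ℕ)
    · simp [hθ₁, hi, hi.not_gt]
    · simp [hθ₁, hi, not_le.mp hi]
  calc ∑ j, (θ₁ j - θ₀ j) ^ 2
      = ∑ i : Fin n, if pstar ≤ (i : ℕ) then θ₀ (e i) ^ 2 else 0 := by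
        rw [← Equiv.sum_comp e]
        exact sum_congr rfl fun i _ => htail i
    _ ≤ ∑ i : Fin n, if pstar ≤ (i : ℕ) then C * (((i : ℕ) : ℝ) + 1) ^ (-(2 / s)) else 0 := by
        gcongr with i
        split_ifs
        · exact sq_le_of_mul_rpow_abs_le hs0 (by positivity) (by positivity) (by positivity)
            (hweak i)
        · rfl
    _ = C * ∑ k ∈ Ico pstar n, ((k : ℝ) + 1) ^ (-(2 / s)) := by
        rw [Fin.sum_ite_le_eq_sum_Ico (fun k => C * ((k : ℝ) + 1) ^ (-(2 / s))), mul_sum]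
    _ ≤ C * ((pstar : ℝ) ^ (1 - 2 / s) / (2 / s - 1)) := by
        gcongr
        exact sum_Ico_rpow_neg_le hp hpstar1 n
    _ = _ := by
        rw [show 2 / s - 1 = (2 - s) / s by field_simp]
        simp only [C]
        field_simp

/-- Projection error bound for weak ℓ_s-balls: keeping the `p*` largest coordinates. -/
theorem weak_ball_projection {n : ℕ} (θ₀ : Fin n → ℝ) (pn : ℕ) (s : ℝ)
    (hs0 : 0 < s) (hs2 : s < 2) (pstar : ℕ) (hpstar1 : 1 ≤ pstar) (hpstarn : pstar ≤ n)
    (e : Equiv.Perm (Fin n))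
    (hsort : ∀ i j : Fin n, i ≤ j → |θ₀ (e j)| ≤ |θ₀ (e i)|)
    (hweak : ∀ i : Fin n, ((i : ℝ) + 1) * |θ₀ (e i)| ^ s ≤ (n : ℝ) * ((pn : ℝ) / n) ^ s)
    (θ₁ : Fin n → ℝ)
    (hθ₁ : θ₁ = fun j => if ((e.symm j : ℕ) < pstar) then θ₀ j else 0) :
    ∑ i, (θ₁ i - θ₀ i) ^ 2 ≤
      ((pn : ℝ) / n) ^ 2 * (s / (2 - s)) * (n : ℝ) ^ (2 / s)
        * (pstar : ℝ) ^ (1 - 2 / s) :=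
  weak_ball_projection_general θ₀ pn s hs0 hs2 pstar hpstar1 e hweak θ₁ hθ₁
end

section
/- Let Π be a probability measure on ℝ^n, θ₀ ∈ ℝ^n, r > 0, and X ~ N(θ₀, I_n). Then with probability at least 1 − exp(−r²/8), one has ∫ (p_{n,θ}/p_{n,θ₀})(X) dΠ(θ) ≥ exp(−r²) · Π({θ : ‖θ − θ₀‖ < r}). -/
/-!
On the ball `B = {θ | ‖θ - θ₀‖ < r}` the log-likelihood ratio is
`⟪X - θ₀, θ - θ₀⟫ - ‖θ - θ₀‖ ^ 2 / 2 ≥ ⟪X - θ₀, θ - θ₀⟫ - r ^ 2 / 2`. Jensen's inequality for `exp`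
on `Π` restricted to `B` therefore bounds the evidence below by `exp (-r ^ 2) * Π B` as soon as
`⟪m, X - θ₀⟫ ≥ -Π(B) r ^ 2 / 2`, where `m = ∫_B (θ - θ₀) dΠ`. Under `N(θ₀, I)` this linear
statistic is centred Gaussian with variance `‖m‖ ^ 2 ≤ (Π(B) r) ^ 2`, so the Chernoff bound makes
the failure probability at most `exp (-r ^ 2 / 8)`.
-/

open MeasureTheory Real

/-- The density of `N(θ, I_n)` on `ℝ^n`. -/
noncomputable def gaussDensity {n : ℕ} (θ x : EuclideanSpace ℝ (Fin n)) : ℝ :=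
  (2 * Real.pi) ^ (-(n : ℝ) / 2) * Real.exp (-‖x - θ‖ ^ 2 / 2)

/-- The Gaussian measure `N(θ, I_n)` on `ℝ^n`, as `volume` with the Gaussian density. -/
noncomputable def gaussMeasure {n : ℕ} (θ : EuclideanSpace ℝ (Fin n)) :
    Measure (EuclideanSpace ℝ (Fin n)) :=
  volume.withDensity (fun x => ENNReal.ofReal (gaussDensity θ x))

open ProbabilityTheory Set
open scoped RealInnerProductSpace NNReal

theorem MeasureTheory.ofReal_integral_le_lintegral_ofReal {α : Type*} [MeasurableSpace α]
    {μ : Measure α} {f : α → ℝ} (hf : Integrable f μ) :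
    ENNReal.ofReal (∫ a, f a ∂μ) ≤ ∫⁻ a, ENNReal.ofReal (f a) ∂μ := by
  rw [integral_eq_lintegral_pos_part_sub_lintegral_neg_part hf]
  exact (ENNReal.ofReal_le_ofReal (sub_le_self _ ENNReal.toReal_nonneg)).trans
    ENNReal.ofReal_toReal_le

theorem MeasureTheory.ofReal_one_sub_le_measure {α : Type*} [MeasurableSpace α]
    {μ : Measure α} [IsProbabilityMeasure μ] {s : Set α} {δ : ℝ} (hδ : 0 ≤ δ)
    (h : μ sᶜ ≤ ENNReal.ofReal δ) :
    ENNReal.ofReal (1 - δ) ≤ μ s :=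
  calc ENNReal.ofReal (1 - δ) = 1 - ENNReal.ofReal δ := by
        rw [ENNReal.ofReal_sub _ hδ, ENNReal.ofReal_one]
    _ ≤ 1 - μ sᶜ := by gcongr
    _ ≤ μ s := by
        rw [tsub_le_iff_right, ← measure_univ (μ := μ)]
        exact measure_univ_le_add_compl s

theorem ProbabilityTheory.HasSubgaussianMGF.mono {Ω : Type*} [MeasurableSpace Ω]
    {μ : Measure Ω} {X : Ω → ℝ} {c c' : ℝ≥0} (h : HasSubgaussianMGF X c μ) (hc : c ≤ c') :
    HasSubgaussianMGF X c' μ :=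
  ⟨h.integrable_exp_mul, fun t => (h.mgf_le t).trans (exp_le_exp.2 (by gcongr))⟩

/-- Jensen's inequality for `exp`, in the form of the tangent line of `exp` at `t`. -/
theorem ofReal_exp_mul_measure_le_lintegral_exp {α : Type*} [MeasurableSpace α]
    {ν : Measure α} [IsFiniteMeasure ν] {g : α → ℝ} (hg : Integrable g ν) {t : ℝ}
    (ht : t * ν.real univ ≤ ∫ a, g a ∂ν) :
    ENNReal.ofReal (exp t) * ν univ ≤ ∫⁻ a, ENNReal.ofReal (exp (g a)) ∂ν := by
  have hdiff : Integrable (fun a => g a - t) ν := hg.sub (integrable_const t)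
  have htangent : Integrable (fun a => exp t * (1 + (g a - t))) ν :=
    ((integrable_const 1).add hdiff).const_mul _
  have hintegral : ∫ a, exp t * (1 + (g a - t)) ∂ν
      = exp t * (ν.real univ + (∫ a, g a ∂ν - t * ν.real univ)) := by
    rw [integral_const_mul, integral_add (integrable_const 1) hdiff,
      integral_sub hg (integrable_const t)]
    simp [mul_comm]
  calc ENNReal.ofReal (exp t) * ν univ = ENNReal.ofReal (exp t * ν.real univ) := by
        rw [ENNReal.ofReal_mul (exp_nonneg t), ofReal_measureReal]
    _ ≤ ENNReal.ofReal (∫ a, exp t * (1 + (g a - t)) ∂ν) := by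
        rw [hintegral]
        gcongr
        linarith
    _ ≤ ∫⁻ a, ENNReal.ofReal (exp t * (1 + (g a - t))) ∂ν :=
        ofReal_integral_le_lintegral_ofReal htangent
    _ ≤ ∫⁻ a, ENNReal.ofReal (exp (g a)) ∂ν := by
        gcongr with a
        calc exp t * (1 + (g a - t)) ≤ exp t * exp (g a - t) := by
              gcongr; linarith [add_one_le_exp (g a - t)]
          _ = exp (g a) := by rw [← exp_add]; ring_nf

section InnerProductSpace

variable {E : Type*} [NormedAddCommGroup E] [InnerProductSpace ℝ E] [CompleteSpace E]

theorem ofReal_exp_neg_sq_mul_measure_le_lintegral_exp_inner {α : Type*} [MeasurableSpace α]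
    {ν : Measure α} [IsFiniteMeasure ν] {f : α → E} (hf : AEStronglyMeasurable f ν) {r : ℝ}
    (hfr : ∀ᵐ a ∂ν, ‖f a‖ ≤ r) {c : E} (hc : -(ν.real univ * r ^ 2 / 2) ≤ ⟪c, ∫ a, f a ∂ν⟫) :
    ENNReal.ofReal (exp (-r ^ 2)) * ν univ
      ≤ ∫⁻ a, ENNReal.ofReal (exp (⟪c, f a⟫ - ‖f a‖ ^ 2 / 2)) ∂ν := by
  have hfint : Integrable f ν := .of_bound hf r hfr
  have hsq_le : ∀ᵐ a ∂ν, ‖f a‖ ^ 2 ≤ r ^ 2 := by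
    filter_upwards [hfr] with a ha
    exact pow_le_pow_left₀ (norm_nonneg _) ha 2
  have hsq : Integrable (fun a => ‖f a‖ ^ 2) ν :=
    .of_bound (hf.norm.pow 2) (r ^ 2) (by simpa using hsq_le)
  have hinner : Integrable (fun a => ⟪c, f a⟫) ν := hfint.const_inner c
  refine ofReal_exp_mul_measure_le_lintegral_exp
    (g := fun a => ⟪c, f a⟫ - ‖f a‖ ^ 2 / 2) (hinner.sub (hsq.div_const 2)) ?_
  have hsq_integral : ∫ a, ‖f a‖ ^ 2 ∂ν ≤ ν.real univ * r ^ 2 := by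
    simpa using integral_mono_ae hsq (integrable_const (r ^ 2)) hsq_le
  rw [integral_sub hinner (hsq.div_const 2), integral_div, integral_inner hfint]
  linarith

end InnerProductSpace

section Gaussian

variable {n : ℕ}

theorem gaussDensity_pos (θ x : EuclideanSpace ℝ (Fin n)) : 0 < gaussDensity θ x := by
  unfold gaussDensity
  positivity

theorem integral_gaussDensity (θ : EuclideanSpace ℝ (Fin n)) : ∫ x, gaussDensity θ x = 1 := by
  have hgauss : ∫ x : EuclideanSpace ℝ (Fin n), exp (-‖x‖ ^ 2 / 2) = (2 * π) ^ ((n : ℝ) / 2) := by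
    simpa [neg_div, div_eq_inv_mul, div_inv_eq_mul, mul_comm]
      using GaussianFourier.integral_rexp_neg_mul_sq_norm
        (V := EuclideanSpace ℝ (Fin n)) (b := 1 / 2) (by norm_num)
  unfold gaussDensity
  rw [integral_const_mul, integral_sub_right_eq_self (fun x => exp (-‖x‖ ^ 2 / 2)) θ, hgauss,
    ← rpow_add (by positivity), neg_div, neg_add_cancel, rpow_zero]

theorem lintegral_gaussDensity (θ : EuclideanSpace ℝ (Fin n)) :
    ∫⁻ x, ENNReal.ofReal (gaussDensity θ x) = 1 := by
  have hint : Integrable (gaussDensity θ) := .of_integral_ne_zero (by simp [integral_gaussDensity])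
  rw [← ofReal_integral_eq_lintegral_ofReal hint (ae_of_all _ fun x => (gaussDensity_pos θ x).le),
    integral_gaussDensity, ENNReal.ofReal_one]

instance isProbabilityMeasure_gaussMeasure (θ : EuclideanSpace ℝ (Fin n)) :
    IsProbabilityMeasure (gaussMeasure θ) :=
  ⟨by rw [gaussMeasure, withDensity_apply _ .univ, setLIntegral_univ, lintegral_gaussDensity]⟩

theorem gaussDensity_div_gaussDensity (θ₀ θ x : EuclideanSpace ℝ (Fin n)) :
    gaussDensity θ x / gaussDensity θ₀ x = exp (⟪x - θ₀, θ - θ₀⟫ - ‖θ - θ₀‖ ^ 2 / 2) := by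
  have hx : x - θ = (x - θ₀) - (θ - θ₀) := by abel
  rw [gaussDensity, gaussDensity, mul_div_mul_left _ _ (by positivity), ← exp_sub, hx,
    norm_sub_sq_real]
  ring_nf

/-- Exponential tilting of `N(θ, I)` in direction `u` is `N(θ + u, I)`, up to normalization. -/
theorem gaussDensity_mul_exp_inner (θ u x : EuclideanSpace ℝ (Fin n)) :
    gaussDensity θ x * exp ⟪u, x - θ⟫ = exp (‖u‖ ^ 2 / 2) * gaussDensity (θ + u) x := by
  have h := gaussDensity_div_gaussDensity θ (θ + u) x
  rw [div_eq_iff (gaussDensity_pos θ x).ne', add_sub_cancel_left, real_inner_comm] at h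
  rw [h, exp_sub]
  field_simp

theorem lintegral_exp_inner_gaussMeasure (θ u : EuclideanSpace ℝ (Fin n)) :
    ∫⁻ x, ENNReal.ofReal (exp ⟪u, x - θ⟫) ∂gaussMeasure θ = ENNReal.ofReal (exp (‖u‖ ^ 2 / 2)) := by
  have hdensity : Measurable fun x => ENNReal.ofReal (gaussDensity θ x) := by
    unfold gaussDensity; fun_prop
  rw [gaussMeasure, lintegral_withDensity_eq_lintegral_mul _ hdensity (by fun_prop)]
  simp_rw [Pi.mul_apply, ← ENNReal.ofReal_mul (gaussDensity_pos θ _).le,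
    gaussDensity_mul_exp_inner, ENNReal.ofReal_mul (exp_nonneg _)]
  rw [lintegral_const_mul' _ _ ENNReal.ofReal_ne_top, lintegral_gaussDensity, mul_one]

theorem hasSubgaussianMGF_inner_gaussMeasure (θ v : EuclideanSpace ℝ (Fin n)) :
    HasSubgaussianMGF (fun x => ⟪v, x - θ⟫) (‖v‖₊ ^ 2) (gaussMeasure θ) := by
  have hlintegral (t : ℝ) : ∫⁻ x, ENNReal.ofReal (exp (t * ⟪v, x - θ⟫)) ∂gaussMeasure θ
      = ENNReal.ofReal (exp (‖v‖ ^ 2 * t ^ 2 / 2)) := by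
    simp_rw [← real_inner_smul_left, lintegral_exp_inner_gaussMeasure, norm_smul, mul_pow,
      norm_eq_abs, sq_abs, mul_comm]
  have hmeas (t : ℝ) : AEStronglyMeasurable (fun x => exp (t * ⟪v, x - θ⟫)) (gaussMeasure θ) :=
    by fun_prop
  have hnonneg (t : ℝ) : 0 ≤ᵐ[gaussMeasure θ] fun x => exp (t * ⟪v, x - θ⟫) :=
    ae_of_all _ fun _ => exp_nonneg _
  refine ⟨fun t => ⟨hmeas t, ?_⟩, fun t => ?_⟩
  · rw [hasFiniteIntegral_iff_ofReal (hnonneg t), hlintegral]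
    exact ENNReal.ofReal_lt_top
  · rw [mgf, integral_eq_lintegral_of_nonneg_ae (hnonneg t) (hmeas t), hlintegral,
      ENNReal.toReal_ofReal (exp_nonneg _)]
    simp

theorem gaussMeasure_inner_le_neg_le (θ v : EuclideanSpace ℝ (Fin n)) {σ ε : ℝ} (hv : ‖v‖ ≤ σ)
    (hε : 0 ≤ ε) :
    gaussMeasure θ {x | ⟪v, x - θ⟫ ≤ -ε} ≤ ENNReal.ofReal (exp (-ε ^ 2 / (2 * σ ^ 2))) := by
  have hσ : ‖v‖₊ ^ 2 ≤ (σ ^ 2).toNNReal := by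
    rw [← NNReal.coe_le_coe, Real.coe_toNNReal _ (sq_nonneg σ)]
    exact pow_le_pow_left₀ (norm_nonneg v) hv 2
  have htail := ((hasSubgaussianMGF_inner_gaussMeasure θ v).mono hσ).neg.measure_ge_le hε
  simp only [Pi.neg_apply, le_neg, Real.coe_toNNReal _ (sq_nonneg σ)] at htail
  rw [← ofReal_measureReal]
  exact ENNReal.ofReal_le_ofReal htail

end Gaussian

theorem ae_restrict_norm_sub_le {n : ℕ} (Pi0 : Measure (EuclideanSpace ℝ (Fin n)))
    (θ₀ : EuclideanSpace ℝ (Fin n)) (r : ℝ) :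
    ∀ᵐ θ ∂Pi0.restrict {θ | ‖θ - θ₀‖ < r}, ‖θ - θ₀‖ ≤ r :=
  ae_restrict_of_forall_mem (measurableSet_lt (by fun_prop) (by fun_prop)) fun _ hθ => hθ.le

section Evidence

variable {n : ℕ} (Pi0 : Measure (EuclideanSpace ℝ (Fin n))) [IsFiniteMeasure Pi0]
  (θ₀ : EuclideanSpace ℝ (Fin n)) {r : ℝ}

theorem ofReal_exp_neg_sq_mul_measure_ball_le_lintegral_gaussDensity_div
    {x : EuclideanSpace ℝ (Fin n)}
    (hx : -(Pi0.real {θ | ‖θ - θ₀‖ < r} * r ^ 2 / 2)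
      ≤ ⟪∫ θ in {θ | ‖θ - θ₀‖ < r}, (θ - θ₀) ∂Pi0, x - θ₀⟫) :
    ENNReal.ofReal (exp (-r ^ 2)) * Pi0 {θ | ‖θ - θ₀‖ < r}
      ≤ ∫⁻ θ, ENNReal.ofReal (gaussDensity θ x / gaussDensity θ₀ x) ∂Pi0 := by
  have h := ofReal_exp_neg_sq_mul_measure_le_lintegral_exp_inner (by fun_prop)
    (ae_restrict_norm_sub_le Pi0 θ₀ r)
    (c := x - θ₀) (by rwa [real_inner_comm, measureReal_restrict_apply_univ])
  rw [Measure.restrict_apply_univ] at h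
  simp_rw [gaussDensity_div_gaussDensity]
  exact h.trans (setLIntegral_le_lintegral _ _)

theorem gaussMeasure_inner_integral_ball_le (hr : 0 < r) (hB : Pi0 {θ | ‖θ - θ₀‖ < r} ≠ 0) :
    gaussMeasure θ₀ {x | ⟪∫ θ in {θ | ‖θ - θ₀‖ < r}, (θ - θ₀) ∂Pi0, x - θ₀⟫
      ≤ -(Pi0.real {θ | ‖θ - θ₀‖ < r} * r ^ 2 / 2)} ≤ ENNReal.ofReal (exp (-r ^ 2 / 8)) := by
  have hm : 0 < Pi0.real {θ | ‖θ - θ₀‖ < r} := ENNReal.toReal_pos hB (measure_ne_top _ _)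
  have hmean : ‖∫ θ in {θ | ‖θ - θ₀‖ < r}, (θ - θ₀) ∂Pi0‖ ≤ Pi0.real {θ | ‖θ - θ₀‖ < r} * r := by
    rw [mul_comm, ← measureReal_restrict_apply_univ]
    exact norm_integral_le_of_norm_le_const (ae_restrict_norm_sub_le Pi0 θ₀ r)
  refine (gaussMeasure_inner_le_neg_le θ₀ _ hmean
    (by positivity : 0 ≤ Pi0.real {θ | ‖θ - θ₀‖ < r} * r ^ 2 / 2)).trans_eq ?_
  congr 2
  field_simp
  ring

end Evidence

theorem evidence_lower_bound {n : ℕ}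
    (Pi0 : Measure (EuclideanSpace ℝ (Fin n))) [IsProbabilityMeasure Pi0]
    (θ₀ : EuclideanSpace ℝ (Fin n)) (r : ℝ) (hr : 0 < r) :
    ENNReal.ofReal (1 - Real.exp (-r ^ 2 / 8)) ≤
      gaussMeasure θ₀ {x |
        ENNReal.ofReal (Real.exp (-r ^ 2))
            * Pi0 {θ | ‖θ - θ₀‖ < r} ≤
          ∫⁻ θ, ENNReal.ofReal (gaussDensity θ x / gaussDensity θ₀ x) ∂Pi0} := by
  rcases eq_or_ne (Pi0 {θ | ‖θ - θ₀‖ < r}) 0 with hB | hB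
  · simp [hB, ENNReal.ofReal_le_one, exp_nonneg]
  refine ofReal_one_sub_le_measure (exp_nonneg _)
    ((measure_mono fun x hx => ?_).trans (gaussMeasure_inner_integral_ball_le Pi0 θ₀ hr hB))
  by_contra hgood
  exact hx (ofReal_exp_neg_sq_mul_measure_ball_le_lintegral_gaussDensity_div Pi0 θ₀
    (not_le.1 hgood).le)
end

section
/- With π_n(p) = C(2n−p, n)/C(2n+1, n) for p ∈ {0,…,n}, π_n is a probability distribution (i.e., Σ_{p=0}^n C(2n−p,n) = C(2n+1,n)), and moreover π_n(p) ≥ (1 − (p+1)/(n+2))^n for all 0 ≤ p ≤ n. -/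
/-!
Reflecting the index turns the sum into the hockey-stick sum `∑_{i ≤ n} C(i + n, n)`.
For the bound write `q = n - p`; then `C(2n - p, n) / C(2n + 1, n)` is the ratio of rising
factorials `(q + 1)^(n) / (n + 2)^(n)`, a product of `n` factors `(q + 1 + i) / (n + 2 + i)`,
each of which is at least `(q + 1) / (n + 2) = 1 - (p + 1) / (n + 2)`.
-/

open Finset

theorem Nat.sum_range_choose_two_mul_sub (n : ℕ) :
    ∑ p ∈ range (n + 1), (2 * n - p).choose n = (2 * n + 1).choose n :=
  calc ∑ p ∈ range (n + 1), (2 * n - p).choose n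
      = ∑ i ∈ range (n + 1), (i + n).choose n := by
        rw [← sum_range_reflect]
        refine sum_congr rfl fun i hi => ?_
        rw [mem_range] at hi
        congr 1
        omega
    _ = (n + n + 1).choose (n + 1) := sum_range_add_choose n n
    _ = (2 * n + 1).choose n := by
        rw [show n + n + 1 = 2 * n + 1 by omega]
        exact Nat.choose_symm_of_eq_add (by omega)

theorem Nat.cast_choose_add_div_choose_add {K : Type*} [Field K] [CharZero K] (a b n : ℕ) :
    ((a + n).choose n : K) / (b + n).choose n =
      ∏ i ∈ range n, ((a + 1 + i : K) / (b + 1 + i)) := by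
  have hasc (c : ℕ) :
      (n.factorial : K) * (c + n).choose n = ∏ i ∈ range n, (c + 1 + i : K) := by
    rw [← Nat.cast_mul, ← Nat.ascFactorial_eq_factorial_mul_choose,
      Nat.ascFactorial_eq_prod_range]
    push_cast
    rfl
  rw [prod_div_distrib, ← hasc, ← hasc,
    mul_div_mul_left _ _ (Nat.cast_ne_zero.mpr n.factorial_ne_zero)]

theorem div_le_add_div_add {K : Type*} [Field K] [LinearOrder K] [IsStrictOrderedRing K]
    {x y t : K} (hxy : x ≤ y) (hy : 0 < y) (ht : 0 ≤ t) : x / y ≤ (x + t) / (y + t) := by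
  rw [div_le_div_iff₀ hy (by positivity)]
  nlinarith [mul_nonneg ht (sub_nonneg.2 hxy)]

theorem pow_div_le_cast_choose_add_div_choose_add {K : Type*} [Field K] [LinearOrder K]
    [IsStrictOrderedRing K] {a b : ℕ} (hab : a ≤ b) (n : ℕ) :
    ((a + 1 : K) / (b + 1)) ^ n ≤ ((a + n).choose n : K) / (b + n).choose n := by
  calc ((a + 1 : K) / (b + 1)) ^ n = ∏ _i ∈ range n, ((a + 1 : K) / (b + 1)) := by
        rw [prod_const, card_range]
    _ ≤ ∏ i ∈ range n, ((a + 1 + i : K) / (b + 1 + i)) := by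
        refine prod_le_prod (fun _ _ => by positivity) fun i _ => ?_
        exact div_le_add_div_add (by exact_mod_cast Nat.add_le_add_right hab 1) (by positivity)
          (by positivity)
    _ = ((a + n).choose n : K) / (b + n).choose n :=
        (Nat.cast_choose_add_div_choose_add a b n).symm

theorem beta_binomial_normalization_and_lower_bound_general (n : ℕ) :
    (∑ p ∈ Finset.range (n + 1), (2 * n - p).choose n) = (2 * n + 1).choose n ∧
    ∀ p : ℕ, p ≤ n →
      (1 - ((p : ℝ) + 1) / ((n : ℝ) + 2)) ^ n ≤
        ((2 * n - p).choose n : ℝ) / ((2 * n + 1).choose n : ℝ) := by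
  refine ⟨Nat.sum_range_choose_two_mul_sub n, fun p hp => ?_⟩
  have hbase :
      1 - ((p : ℝ) + 1) / ((n : ℝ) + 2) = ((n - p : ℕ) + 1 : ℝ) / ((n + 1 : ℕ) + 1) := by
    push_cast [hp]
    field_simp
    ring
  rw [hbase, show 2 * n - p = n - p + n by omega, show 2 * n + 1 = n + 1 + n by omega]
  exact pow_div_le_cast_choose_add_div_choose_add (by omega) n

theorem beta_binomial_normalization_and_lower_bound (n : ℕ) (hn : 1 ≤ n) :
    (∑ p ∈ Finset.range (n + 1), (2 * n - p).choose n) = (2 * n + 1).choose n ∧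
    ∀ p : ℕ, p ≤ n →
      (1 - ((p : ℝ) + 1) / ((n : ℝ) + 2)) ^ n ≤
        ((2 * n - p).choose n : ℝ) / ((2 * n + 1).choose n : ℝ) :=
  beta_binomial_normalization_and_lower_bound_general n
end

section
/- Let π_n(k) ∝ exp(−k·(log k)^a) for k ∈ {1,…,n} with a ≥ 1, and let p_n → ∞ with (3p_n/4)^{2^{1/a}} ≥ ne and log(3p_n/4) ≥ 2^{−1/a}·log p_n. Then (π_n(3p_n/4)/π_n(p_n/4)) · C(n, p_n/4) ≤ exp(−(p_n/8)·(log p_n)^a) for all sufficiently large n. -/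
/-!
With `P = p n`, `L₁ = log (P/4)`, `L₃ = log (3P/4)` and `u = 2^{1/a} L₃` (so that `u^a = 2 L₃^a`),
the bound `C(n,k) ≤ (ne/k)^k` and the first condition `log n + 1 ≤ u` reduce the claim, after
taking logarithms, to `(P/4)(L₁^a - L₁ + u) - (3P/4) L₃^a ≤ -(P/8) (log P)^a`. Since
`x ↦ x^a - x` is nondecreasing on `[1, ∞)` and `1 ≤ L₁ ≤ u`, the left side is at most
`(P/4)(u^a) - (3P/4) L₃^a = -(P/4) L₃^a`, and the second condition says `(log P)^a ≤ 2 L₃^a`.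
-/

open Real Filter

theorem Nat.choose_le_mul_exp_one_div_pow (n k : ℕ) :
    (n.choose k : ℝ) ≤ (n * exp 1 / k) ^ k := by
  rcases k.eq_zero_or_pos with rfl | hk
  · simp
  have hk' : (0 : ℝ) < k := by exact_mod_cast hk
  have hfact : (0 : ℝ) < k.factorial := by exact_mod_cast k.factorial_pos
  have hkk : (k : ℝ) ^ k ≤ exp 1 ^ k * k.factorial := by
    rw [← exp_nat_mul, mul_one, ← div_le_iff₀ hfact]
    exact pow_div_factorial_le_exp (k : ℝ) hk'.le k
  calc (n.choose k : ℝ) ≤ n ^ k / k.factorial := Nat.choose_le_pow_div k n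
    _ ≤ n ^ k * exp 1 ^ k / k ^ k := by
        rw [div_le_div_iff₀ hfact (pow_pos hk' k), mul_assoc]
        gcongr
    _ = (n * exp 1 / k) ^ k := by rw [div_pow, mul_pow]

theorem Nat.choose_le_exp {n k : ℕ} (hn : n ≠ 0) (hk : k ≠ 0) :
    (n.choose k : ℝ) ≤ exp (k * (Real.log n + 1 - Real.log k)) := by
  rw [exp_nat_mul, exp_sub, exp_add, exp_log (by positivity), exp_log (by positivity)]
  exact Nat.choose_le_mul_exp_one_div_pow n k

theorem Real.rpow_sub_self_le_rpow_sub_self {a x y : ℝ} (ha : 1 ≤ a) (hx : 1 ≤ x)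
    (hxy : x ≤ y) : x ^ a - x ≤ y ^ a - y := by
  have hy : 1 ≤ y := hx.trans hxy
  have hsplit : ∀ z : ℝ, 1 ≤ z → z ^ a - z = z * (z ^ (a - 1) - 1) := fun z hz => by
    rw [mul_sub, mul_one, ← rpow_one_add' (by linarith) (by linarith), add_sub_cancel]
  rw [hsplit x hx, hsplit y hy]
  have hxa : 1 ≤ x ^ (a - 1) := one_le_rpow hx (by linarith)
  have hxya : x ^ (a - 1) ≤ y ^ (a - 1) := rpow_le_rpow (by linarith) hxy (by linarith)
  exact mul_le_mul hxy (by linarith) (by linarith) (by linarith)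

theorem Real.rpow_le_mul_rpow_of_rpow_neg_inv_mul_le {a c x y : ℝ} (ha : 0 < a) (hc : 0 < c)
    (hx : 0 ≤ x) (h : c ^ (-(1 / a)) * x ≤ y) : x ^ a ≤ c * y ^ a := by
  have hcx : x ≤ c ^ (1 / a) * y := by
    rw [rpow_neg hc.le, inv_mul_le_iff₀ (by positivity)] at h
    exact h
  calc x ^ a ≤ (c ^ (1 / a) * y) ^ a := rpow_le_rpow hx hcx ha.le
    _ = c * y ^ a := by
        have hy : 0 ≤ y := le_trans (by positivity) h
        rw [mul_rpow (by positivity) hy, one_div, rpow_inv_rpow hc.le ha.ne']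

theorem prior_ratio_mul_choose_le {a P : ℝ} (ha : 1 ≤ a) (hP : 12 ≤ P) {n k : ℕ} (hn : n ≠ 0)
    (hk : (k : ℝ) = P / 4)
    (hcond1 : (n : ℝ) * exp 1 ≤ (3 * P / 4) ^ ((2 : ℝ) ^ (1 / a)))
    (hcond2 : (2 : ℝ) ^ (-(1 / a)) * log P ≤ log (3 * P / 4)) :
    exp (-(3 * P / 4) * log (3 * P / 4) ^ a) / exp (-(P / 4) * log (P / 4) ^ a)
        * (n.choose k : ℝ) ≤ exp (-(P / 8) * log P ^ a) := by
  set L₁ := log (P / 4)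
  set L₃ := log (3 * P / 4)
  set u := (2 : ℝ) ^ (1 / a) * L₃
  have hL₁ : 1 ≤ L₁ := by
    rw [le_log_iff_exp_le (by linarith)]
    linarith [exp_one_lt_three]
  have hL₁₃ : L₁ ≤ L₃ := log_le_log (by linarith) (by linarith)
  have hL₃u : L₃ ≤ u := le_mul_of_one_le_left (by linarith) (one_le_rpow one_le_two (by positivity))
  have hu : u ^ a = 2 * L₃ ^ a := by
    rw [mul_rpow (by positivity) (by linarith), one_div, rpow_inv_rpow zero_le_two (by linarith)]
  have hlog_n : log n + 1 ≤ u := by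
    have h := log_le_log (by positivity) hcond1
    rwa [log_mul (by positivity) (exp_pos 1).ne', log_exp, log_rpow (by linarith)] at h
  have hlog_P : log P ^ a ≤ 2 * L₃ ^ a :=
    rpow_le_mul_rpow_of_rpow_neg_inv_mul_le (by linarith) two_pos (log_nonneg (by linarith)) hcond2
  have hmono : L₁ ^ a - L₁ ≤ 2 * L₃ ^ a - u :=
    hu ▸ rpow_sub_self_le_rpow_sub_self ha hL₁ (hL₁₃.trans hL₃u)
  have hk₀ : k ≠ 0 := by rintro rfl; norm_num at hk; linarith
  have hchoose : (n.choose k : ℝ) ≤ exp (P / 4 * (log n + 1 - L₁)) := by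
    simpa only [hk] using Nat.choose_le_exp hn hk₀
  have hP4 : (0 : ℝ) ≤ P / 4 := by linarith
  rw [div_mul_eq_mul_div, div_le_iff₀ (exp_pos _), ← exp_add]
  calc exp (-(3 * P / 4) * L₃ ^ a) * (n.choose k : ℝ)
      ≤ exp (-(3 * P / 4) * L₃ ^ a) * exp (P / 4 * (log n + 1 - L₁)) := by gcongr
    _ = exp (-(3 * P / 4) * L₃ ^ a + P / 4 * (log n + 1 - L₁)) := (exp_add _ _).symm
    _ ≤ exp (-(P / 8) * log P ^ a + -(P / 4) * L₁ ^ a) := by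
        refine exp_le_exp.mpr ?_
        linarith [mul_le_mul_of_nonneg_left hmono hP4, mul_le_mul_of_nonneg_left hlog_n hP4,
          mul_le_mul_of_nonneg_left hlog_P hP4]

theorem fast_decreasing_prior_ratio_bound (a : ℝ) (ha : 1 ≤ a) (p : ℕ → ℕ)
    (hdiv : ∀ n, 4 ∣ p n)
    (htop : Filter.Tendsto p Filter.atTop Filter.atTop)
    (hcond1 : ∀ n : ℕ, (n : ℝ) * Real.exp 1 ≤ (3 * (p n : ℝ) / 4) ^ ((2 : ℝ) ^ (1 / a)))
    (hcond2 : ∀ n : ℕ, (2 : ℝ) ^ (-(1 / a)) * Real.log (p n) ≤ Real.log (3 * (p n : ℝ) / 4)) :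
    ∀ᶠ n : ℕ in Filter.atTop,
      Real.exp (-(3 * (p n : ℝ) / 4) * Real.log (3 * (p n : ℝ) / 4) ^ a)
          / Real.exp (-((p n : ℝ) / 4) * Real.log ((p n : ℝ) / 4) ^ a)
          * (n.choose (p n / 4) : ℝ) ≤
        Real.exp (-((p n : ℝ) / 8) * Real.log (p n) ^ a) := by
  filter_upwards [htop.eventually_ge_atTop 12, eventually_ne_atTop 0] with n hp hn
  have hk : ((p n / 4 : ℕ) : ℝ) = p n / 4 := Nat.cast_div (hdiv n) (by norm_num)
  simpa only [neg_div] using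
    prior_ratio_mul_choose_le ha (by exact_mod_cast hp) hn hk (hcond1 n) (hcond2 n)
end
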